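/- arXiv:2303.14657 — 7 statements merged into one kernel-verified Lean document; each statement's English description precedes it below -/
import Mathlib

section
/- Let N ≥ 1, Z* ∈ (ℝ²)^N, λ₀ > 0, d > 0, and let Z : (−∞, 0] → (ℝ²)^N be continuous with Z(t) ≠ Z* for all t in a neighbourhood of −∞. Assume Z(t) → Z* as t → −∞, (1/t) ln |Z(t) − Z*|_∞ → λ₀ as t → −∞, and sup_{t ≤ 0} |Z(t) − Z*|_∞ ≥ d. Then for every λ ∈ (0, λ₀), every β ∈ (0,1) and every sufficiently small ε > 0, there exist times t₀ ≤ t₁ ≤ 0 such that |Z(t₀) − Z*|_∞ = ε/2, |Z(t₁) − Z*|_∞ = 2ε^β, |Z(s) − Z*|_∞ < 2ε^β for all s ∈ [t₀, t₁), and t₁ − t₀ ≤ ((1−β)/λ) |ln ε|. -/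
open Filter Set

private lemma rpow_lt_of_lt_rpow_inv {x c β : ℝ} (hx : 0 ≤ x) (hc : 0 < c) (hβ : 0 < β)
    (h : x < c ^ (1/β)) : x ^ β < c := by
  have h2 := Real.rpow_lt_rpow hx h hβ
  rwa [← Real.rpow_mul hc.le, one_div_mul_cancel hβ.ne', Real.rpow_one] at h2

/-- quantitative exit-time estimate for a trajectory converging to `Z*`
at exponential rate `λ₀` as `t → −∞` and exiting a fixed neighbourhood of `Z*`.
Here `(ℝ²)^N` is modelled as `Fin N → ℂ`, whose norm is the sup of the Euclidean norms
of the `N` components. -/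
theorem exit_time_from_exponential_rate
    (N : ℕ) (hN : 1 ≤ N) (Zstar : Fin N → ℂ) (lam₀ d : ℝ)
    (hlam₀ : 0 < lam₀) (hd : 0 < d)
    (Z : ℝ → Fin N → ℂ) (hZcont : ContinuousOn Z (Set.Iic 0))
    (hne : ∃ T : ℝ, ∀ t : ℝ, t ≤ T → Z t ≠ Zstar)
    (htend : Filter.Tendsto Z Filter.atBot (nhds Zstar))
    (hrate : Filter.Tendsto (fun t : ℝ => Real.log ‖Z t - Zstar‖ / t)
      Filter.atBot (nhds lam₀))
    (hexit : d ≤ ⨆ t : Set.Iic (0 : ℝ), ‖Z t.1 - Zstar‖) :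
    ∀ lam : ℝ, 0 < lam → lam < lam₀ →
    ∀ β : ℝ, 0 < β → β < 1 →
    ∃ ε₀ > 0, ∀ ε : ℝ, 0 < ε → ε < ε₀ →
    ∃ t₀ t₁ : ℝ, t₀ ≤ t₁ ∧ t₁ ≤ 0 ∧
      ‖Z t₀ - Zstar‖ = ε / 2 ∧
      ‖Z t₁ - Zstar‖ = 2 * ε ^ β ∧
      (∀ s ∈ Set.Ico t₀ t₁, ‖Z s - Zstar‖ < 2 * ε ^ β) ∧
      t₁ - t₀ ≤ (1 - β) / lam * |Real.log ε| := by
  intro lam hlam hlamlt β hβ hβ1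
  set f : ℝ → ℝ := fun t => ‖Z t - Zstar‖ with hf_def
  have hfc : ContinuousOn f (Set.Iic 0) := (hZcont.sub continuousOn_const).norm
  have hf0 : Tendsto f atBot (nhds 0) := by
    have h := (htend.sub (tendsto_const_nhds (x := Zstar))).norm
    simpa using h
  -- choose δ
  obtain ⟨δ, ⟨hK, hδlt⟩, hδpos⟩ : ∃ δ : ℝ, (1/(lam₀-δ) - β/(lam₀+δ) < (1-β)/lam ∧ δ < lam₀)
      ∧ δ ∈ Set.Ioi (0:ℝ) := by
    have hc : ContinuousAt (fun δ : ℝ => 1/(lam₀-δ) - β/(lam₀+δ)) 0 := by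
      apply ContinuousAt.sub
      · exact ContinuousAt.div continuousAt_const
          (continuousAt_const.sub continuousAt_id) (by simpa using hlam₀.ne')
      · exact ContinuousAt.div continuousAt_const
          (continuousAt_const.add continuousAt_id) (by simpa using hlam₀.ne')
    have hval : 1/(lam₀-(0:ℝ)) - β/(lam₀+(0:ℝ)) = (1-β)/lam₀ := by
      rw [sub_zero, add_zero]
      field_simp
    have hlt : (1-β)/lam₀ < (1-β)/lam :=
      div_lt_div_of_pos_left (by linarith) hlam hlamlt
    have h1 : ∀ᶠ δ in nhds (0:ℝ), 1/(lam₀-δ) - β/(lam₀+δ) < (1-β)/lam := by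
      refine Filter.Tendsto.eventually_lt_const ?_ hc.tendsto
      rw [hval] at *; exact hlt
    have h2 : ∀ᶠ δ in nhds (0:ℝ), δ < lam₀ := eventually_lt_nhds hlam₀
    have h3 := ((h1.and h2).filter_mono (nhdsWithin_le_nhds (s := Set.Ioi (0:ℝ))))
    exact (h3.and eventually_mem_nhdsWithin).exists
  simp only [Set.mem_Ioi] at hδpos
  have hlam₀δ : 0 < lam₀ - δ := by linarith
  have hlam₀δ' : 0 < lam₀ + δ := by linarith
  set K : ℝ := 1/(lam₀-δ) - β/(lam₀+δ) with hK_def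
  set gap : ℝ := (1-β)/lam - K with hgap_def
  have hgap : 0 < gap := by simp only [hgap_def]; linarith
  set C : ℝ := Real.log 2 * (1/(lam₀+δ) + 1/(lam₀-δ)) with hC_def
  have hlog2 : 0 < Real.log 2 := Real.log_pos one_lt_two
  have hCpos : 0 < C := by
    apply mul_pos hlog2
    have := one_div_pos.mpr hlam₀δ
    have := one_div_pos.mpr hlam₀δ'
    linarith
  -- rate control: get T ≤ 0 with pointwise bounds for t ≤ T
  obtain ⟨T, hT⟩ : ∃ T : ℝ, ∀ t ≤ T, Real.log (f t) / t ∈ Set.Icc (lam₀ - δ) (lam₀ + δ) := by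
    have h := hrate (Icc_mem_nhds (show lam₀ - δ < lam₀ by linarith)
      (show lam₀ < lam₀ + δ by linarith))
    exact eventually_atBot.mp h
  obtain ⟨T, hT0, hT⟩ : ∃ T : ℝ, T ≤ 0 ∧ ∀ t ≤ T,
      (lam₀+δ)*t ≤ Real.log (f t) ∧ Real.log (f t) ≤ (lam₀-δ)*t ∧ 0 < f t := by
    refine ⟨min T (-1), le_trans (min_le_right _ _) (by norm_num), fun t ht => ?_⟩
    have ht1 : t ≤ -1 := ht.trans (min_le_right _ _)
    have htneg : t < 0 := by linarith
    have h := hT t (ht.trans (min_le_left _ _))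
    have hub : (lam₀+δ)*t ≤ Real.log (f t) := (div_le_iff_of_neg htneg).mp h.2
    have hlb : Real.log (f t) ≤ (lam₀-δ)*t := (le_div_iff_of_neg htneg).mp h.1
    have hlogneg : Real.log (f t) < 0 := lt_of_le_of_lt hlb (by
      have : (lam₀ - δ) * t < 0 := mul_neg_of_pos_of_neg hlam₀δ htneg
      exact this)
    have hfpos : 0 < f t := by
      rcases lt_or_eq_of_le (norm_nonneg (Z t - Zstar)) with h' | h'
      · exact h'
      · exfalso; rw [hf_def] at hlogneg; simp [← h'] at hlogneg
    exact ⟨hub, hlb, hfpos⟩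
  -- f T is bounded below
  have hfT : Real.exp ((lam₀+δ)*T) ≤ f T := by
    obtain ⟨h1, _, h3⟩ := hT T le_rfl
    calc Real.exp ((lam₀+δ)*T) ≤ Real.exp (Real.log (f T)) := Real.exp_le_exp.mpr h1
      _ = f T := Real.exp_log h3
  have hexpTpos : 0 < Real.exp ((lam₀+δ)*T) := Real.exp_pos _
  -- define ε₀
  refine ⟨min (min 1 ((Real.exp ((lam₀+δ)*T)/2) ^ (1/β))) (Real.exp (-(C/gap))), ?_, ?_⟩
  · apply lt_min (lt_min one_pos (Real.rpow_pos_of_pos (by positivity) _)) (Real.exp_pos _)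
  intro ε hε hεlt
  have hε1 : ε < 1 := lt_of_lt_of_le hεlt ((min_le_left _ _).trans (min_le_left _ _))
  have hεrT : ε < (Real.exp ((lam₀+δ)*T)/2) ^ (1/β) :=
    lt_of_lt_of_le hεlt ((min_le_left _ _).trans (min_le_right _ _))
  have hεC : ε < Real.exp (-(C/gap)) := lt_of_lt_of_le hεlt (min_le_right _ _)
  have hεβpos : 0 < ε ^ β := Real.rpow_pos_of_pos hε β
  have h2εβpos : 0 < 2 * ε ^ β := by linarith
  have hεβT : 2 * ε ^ β < Real.exp ((lam₀+δ)*T) := by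
    have := rpow_lt_of_lt_rpow_inv hε.le (by positivity) hβ hεrT
    linarith
  have hlogε : Real.log ε < -(C/gap) := by
    have := Real.log_lt_log hε hεC
    rwa [Real.log_exp] at this
  have hlogεneg : Real.log ε < 0 := by
    have h0 : -(C/gap) < 0 := neg_lt_zero.mpr (by positivity)
    linarith
  have habs : |Real.log ε| = -Real.log ε := abs_of_neg hlogεneg
  -- half-level comparison: ε/2 < 2 ε^β
  have hhalf : ε / 2 < 2 * ε ^ β := by
    have h1 : ε ^ (1:ℝ) ≤ ε ^ β := Real.rpow_le_rpow_of_exponent_ge hε hε1.le hβ1.le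
    rw [Real.rpow_one] at h1
    linarith
  -- construct t₁
  set A : Set ℝ := Set.Iic 0 ∩ f ⁻¹' (Set.Ici (2 * ε ^ β)) with hA_def
  have hAclosed : IsClosed A := hfc.preimage_isClosed_of_isClosed isClosed_Iic isClosed_Ici
  have hTA : T ∈ A := ⟨hT0, by simp only [Set.mem_preimage, Set.mem_Ici]; linarith⟩
  have hAne : A.Nonempty := ⟨T, hTA⟩
  obtain ⟨T₂, hT₂⟩ : ∃ T₂ : ℝ, ∀ t ≤ T₂, f t < 2 * ε ^ β :=
    eventually_atBot.mp (hf0.eventually_lt_const h2εβpos)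
  have hAbdd : BddBelow A := by
    refine ⟨T₂, fun a ha => ?_⟩
    by_contra h
    push_neg at h
    have h2 := ha.2
    simp only [Set.mem_preimage, Set.mem_Ici] at h2
    exact absurd h2 (not_le.mpr (hT₂ a h.le))
  set t₁ : ℝ := sInf A with ht₁_def
  have ht₁A : t₁ ∈ A := hAclosed.csInf_mem hAne hAbdd
  have ht₁0 : t₁ ≤ 0 := ht₁A.1
  have hft₁ge : 2 * ε ^ β ≤ f t₁ := ht₁A.2
  have ht₁T : t₁ ≤ T := csInf_le hAbdd hTA
  have hbefore : ∀ s, s < t₁ → f s < 2 * ε ^ β := by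
    intro s hs
    by_contra h
    push_neg at h
    have : s ∈ A := ⟨le_trans hs.le ht₁0, h⟩
    exact absurd (csInf_le hAbdd this) (not_le.mpr hs)
  have hft₁le : f t₁ ≤ 2 * ε ^ β := by
    have hcw : ContinuousWithinAt f (Set.Iio t₁) t₁ :=
      (hfc t₁ ht₁0).mono (fun x hx => le_trans (le_of_lt hx) ht₁0)
    refine le_of_tendsto hcw ?_
    exact eventually_mem_nhdsWithin.mono (fun s hs => (hbefore s hs).le)
  have hft₁ : f t₁ = 2 * ε ^ β := le_antisymm hft₁le hft₁ge
  -- construct t₀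
  set B : Set ℝ := Set.Iic t₁ ∩ f ⁻¹' (Set.Iic (ε / 2)) with hB_def
  have hBclosed : IsClosed B :=
    (hfc.mono (Set.Iic_subset_Iic.mpr ht₁0)).preimage_isClosed_of_isClosed
      isClosed_Iic isClosed_Iic
  obtain ⟨T₃, hT₃⟩ : ∃ T₃ : ℝ, ∀ t ≤ T₃, f t < ε / 2 :=
    eventually_atBot.mp (hf0.eventually_lt_const (by positivity))
  have hBne : B.Nonempty :=
    ⟨min T₃ t₁, Set.mem_inter (Set.mem_Iic.mpr (min_le_right _ _))
      (Set.mem_preimage.mpr (Set.mem_Iic.mpr (hT₃ _ (min_le_left _ _)).le))⟩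
  have hBbdd : BddAbove B := ⟨t₁, fun a ha => ha.1⟩
  set t₀ : ℝ := sSup B with ht₀_def
  have ht₀B : t₀ ∈ B := hBclosed.csSup_mem hBne hBbdd
  have ht₀t₁ : t₀ ≤ t₁ := ht₀B.1
  have hft₀le : f t₀ ≤ ε / 2 := ht₀B.2
  have ht₁notB : t₁ ∉ B := by
    intro h
    have := h.2
    simp only [Set.mem_preimage, Set.mem_Iic] at this
    rw [hft₁] at this
    linarith
  have ht₀lt : t₀ < t₁ := lt_of_le_of_ne ht₀t₁ (fun h => ht₁notB (h ▸ ht₀B))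
  have hmid : ∀ s, t₀ < s → s ≤ t₁ → ε / 2 < f s := by
    intro s hs hst
    by_contra h
    push_neg at h
    exact absurd (le_csSup hBbdd ⟨hst, h⟩) (not_le.mpr hs)
  have hft₀ge : ε / 2 ≤ f t₀ := by
    have hcw : ContinuousWithinAt f (Set.Ioc t₀ t₁) t₀ :=
      (hfc t₀ (ht₀t₁.trans ht₁0)).mono (fun x hx => le_trans hx.2 ht₁0)
    have hne' : (nhdsWithin t₀ (Set.Ioc t₀ t₁)).NeBot := by
      rw [nhdsWithin_Ioc_eq_nhdsGT ht₀lt]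
      infer_instance
    refine ge_of_tendsto hcw ?_
    exact eventually_mem_nhdsWithin.mono (fun s hs => (hmid s hs.1 hs.2).le)
  have hft₀ : f t₀ = ε / 2 := le_antisymm hft₀le hft₀ge
  -- time bound
  have ht₁b : t₁ ≤ (Real.log 2 + β * Real.log ε) / (lam₀ + δ) := by
    have h := (hT t₁ ht₁T).1
    rw [hft₁, Real.log_mul two_ne_zero hεβpos.ne', Real.log_rpow hε] at h
    rw [le_div_iff₀ hlam₀δ']
    linarith [h]
  have ht₀b : (Real.log ε - Real.log 2) / (lam₀ - δ) ≤ t₀ := by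
    have h := (hT t₀ (ht₀t₁.trans ht₁T)).2.1
    rw [hft₀, Real.log_div hε.ne' two_ne_zero] at h
    rw [div_le_iff₀ hlam₀δ]
    linarith [h]
  have hsum : t₁ - t₀ ≤ C + (-Real.log ε) * K := by
    have heq : (Real.log 2 + β * Real.log ε) / (lam₀ + δ)
        - (Real.log ε - Real.log 2) / (lam₀ - δ) = C + (-Real.log ε) * K := by
      simp only [hC_def, hK_def]
      ring
    rw [← heq]
    linarith [ht₁b, ht₀b]
  have hCgap : C < (-Real.log ε) * gap := by
    have h1 : C / gap < -Real.log ε := by linarith [hlogε]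
    exact (div_lt_iff₀ hgap).mp h1
  have hfinal : t₁ - t₀ ≤ (1 - β) / lam * |Real.log ε| := by
    rw [habs]
    have hexp : (-Real.log ε) * gap = (-Real.log ε) * ((1-β)/lam) - (-Real.log ε) * K := by
      simp only [hgap_def]; ring
    calc t₁ - t₀ ≤ C + (-Real.log ε) * K := hsum
      _ ≤ (-Real.log ε) * ((1-β)/lam) := by
          rw [hexp] at hCgap; linarith
      _ = (1-β)/lam * (-Real.log ε) := by ring
  refine ⟨t₀, t₁, ht₀t₁, ht₁0, hft₀, hft₁, ?_, hfinal⟩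
  intro s hs
  exact hbefore s hs.2
end

section
/- Let N ≥ 3, α ∈ [1,2), and C_α > 0. Identify ℝ² with ℂ and set ζ = exp(2πi/(N−1)). Define z_j* = ζ^j for j = 1,…,N−1 and z_N* = 0, with intensities a_j = 1 for j = 1,…,N−1 and a_N = −Σ_{j=1}^{N−2} (1−ζ^j)/|1−ζ^j|^{α+1} (a real number). Then this configuration is a stationary solution of the α-point-vortex system: for every i ∈ {1,…,N}, Σ_{j≠i} a_j K_α(z_i*, z_j*) = 0. -/
/-!
The rotation `z ↦ ζ z` by an `M`-th root of unity permutes the polygon of vortices and the kernel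
is rotation-equivariant, `K(w x, w y) = w K(x, y)` for `|w| = 1`. Hence the velocity the polygon
induces at the centre is fixed by a rotation `ζ ≠ 1` and vanishes, while at a vertex `w` it is
`w` times the velocity at the vertex `1`, namely `C_α i w S` with
`S = ∑_{u^M = 1} (1 - u)/|1 - u|^{α+1}`. The central vortex contributes `a_N C_α i w`, so the
choice `a_N = -S` balances every vertex; `S` is real because complex conjugation also permutes
the roots of unity.
-/

/-- The Biot–Savart kernel `K_α(x,y) = C_α (x−y)^⊥ / |x−y|^{α+1}`, with `ℝ²`
identified with `ℂ` (so that `v^⊥ = i·v`). -/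
noncomputable def biotSavartK (α Cα : ℝ) (x y : ℂ) : ℂ :=
  (Cα / ‖x - y‖ ^ (α + 1)) • (Complex.I * (x - y))

open Finset Polynomial Complex ComplexConjugate

section RootsOfUnity

variable {K β : Type*} [Field K] [AddCommMonoid β] {M : ℕ}

theorem Polynomial.sum_nthRootsFinset_one_mul_left {w : K} (hw : w ^ M = 1) (f : K → β) :
    ∑ z ∈ nthRootsFinset M (1 : K), f (w * z) = ∑ z ∈ nthRootsFinset M (1 : K), f z := by
  rcases M.eq_zero_or_pos with rfl | hM
  · simp
  have hw₀ : w ≠ 0 := by rintro rfl; simp [hM.ne'] at hw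
  refine sum_bijective (w * ·) (mulLeft_bijective₀ w hw₀) (fun z => ?_) (fun _ _ => rfl)
  simp [mem_nthRootsFinset hM, mul_pow, hw]

theorem Polynomial.sum_nthRootsFinset_one_star [StarRing K] (f : K → β) :
    ∑ z ∈ nthRootsFinset M (1 : K), f (star z) = ∑ z ∈ nthRootsFinset M (1 : K), f z := by
  rcases M.eq_zero_or_pos with rfl | hM
  · simp
  refine sum_bijective star star_involutive.bijective (fun z => ?_) (fun _ _ => rfl)
  rw [mem_nthRootsFinset hM, mem_nthRootsFinset hM, ← star_pow, ← star_one, star_inj, star_one]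

namespace IsPrimitiveRoot

variable {ζ : K}

theorem sum_nthRootsFinset_one (hζ : IsPrimitiveRoot ζ M) (f : K → β) :
    ∑ z ∈ nthRootsFinset M (1 : K), f z = ∑ j ∈ range M, f (ζ ^ j) := by
  rcases M.eq_zero_or_pos with rfl | hM
  · simp
  have := NeZero.of_pos hM
  refine (sum_nbij (ζ ^ ·) (fun j _ => ?_) hζ.injOn_pow (fun z hz => ?_) (fun _ _ => rfl)).symm
  · rw [Polynomial.mem_nthRootsFinset hM, pow_right_comm, hζ.pow_eq_one, one_pow]
  · obtain ⟨j, hj, rfl⟩ :=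
      hζ.eq_pow_of_pow_eq_one ((Polynomial.mem_nthRootsFinset hM _).1 hz)
    exact ⟨j, mem_range.2 hj, rfl⟩

theorem sum_fin_pow_succ (hζ : IsPrimitiveRoot ζ M) (f : K → β) :
    ∑ j : Fin M, f (ζ ^ ((j : ℕ) + 1)) = ∑ z ∈ nthRootsFinset M (1 : K), f z := by
  rw [Fin.sum_univ_eq_sum_range (fun j => f (ζ ^ (j + 1))),
    ← sum_nthRootsFinset_one_mul_left hζ.pow_eq_one, hζ.sum_nthRootsFinset_one]
  simp only [pow_succ']

theorem sum_Icc_pow (hζ : IsPrimitiveRoot ζ M) {f : K → β} (hf : f 1 = 0) :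
    ∑ j ∈ Icc 1 (M - 1), f (ζ ^ j) = ∑ z ∈ nthRootsFinset M (1 : K), f z := by
  rw [hζ.sum_nthRootsFinset_one]
  refine sum_subset (fun j hj => ?_) (fun j hj hj' => ?_)
  · simp only [mem_Icc, mem_range] at hj ⊢; omega
  · obtain rfl : j = 0 := by simp only [mem_Icc, mem_range] at hj hj'; omega
    rw [pow_zero, hf]

end IsPrimitiveRoot

end RootsOfUnity

section BiotSavart

variable (α Cα : ℝ)

theorem biotSavartK_self (x : ℂ) : biotSavartK α Cα x x = 0 := by
  simp [biotSavartK]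

theorem biotSavartK_eq (x y : ℂ) :
    biotSavartK α Cα x y = Cα * I * ((x - y) / ((‖x - y‖ ^ (α + 1) : ℝ) : ℂ)) := by
  rw [biotSavartK, real_smul, ofReal_div]
  ring

theorem biotSavartK_mul_mul {w : ℂ} (hw : ‖w‖ = 1) (x y : ℂ) :
    biotSavartK α Cα (w * x) (w * y) = w * biotSavartK α Cα x y := by
  rw [biotSavartK, biotSavartK, ← mul_sub, norm_mul, hw, one_mul, mul_left_comm, mul_smul_comm]

theorem biotSavartK_zero_right {w : ℂ} (hw : ‖w‖ = 1) :
    biotSavartK α Cα w 0 = Cα * I * w := by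
  rw [biotSavartK_eq, sub_zero, hw, Real.one_rpow, ofReal_one, div_one]

end BiotSavart

noncomputable def polygonInteraction (α : ℝ) (M : ℕ) : ℂ :=
  ∑ u ∈ nthRootsFinset M (1 : ℂ), (1 - u) / ((‖1 - u‖ ^ (α + 1) : ℝ) : ℂ)

theorem ofReal_re_polygonInteraction (α : ℝ) (M : ℕ) :
    ((polygonInteraction α M).re : ℂ) = polygonInteraction α M := by
  rw [← conj_eq_iff_re, polygonInteraction, map_sum, ← sum_nthRootsFinset_one_star]
  refine sum_congr rfl fun u _ => ?_
  have hnorm : ‖1 - conj u‖ = ‖1 - u‖ := by rw [← norm_conj, map_sub, map_one, conj_conj]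
  simp [hnorm, map_div₀]

section PolygonVelocity

variable (α Cα : ℝ) {M : ℕ}

theorem sum_nthRootsFinset_biotSavartK_mul_left (hM : 0 < M) {w : ℂ} (hw : w ^ M = 1) (x : ℂ) :
    ∑ u ∈ nthRootsFinset M (1 : ℂ), biotSavartK α Cα (w * x) u =
      w * ∑ u ∈ nthRootsFinset M (1 : ℂ), biotSavartK α Cα x u := by
  rw [mul_sum, ← sum_nthRootsFinset_one_mul_left hw]
  simp only [biotSavartK_mul_mul α Cα (norm_eq_one_of_pow_eq_one hw hM.ne')]

theorem sum_nthRootsFinset_biotSavartK (hM : 0 < M) {w : ℂ} (hw : w ^ M = 1) :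
    ∑ u ∈ nthRootsFinset M (1 : ℂ), biotSavartK α Cα w u =
      Cα * I * w * polygonInteraction α M := by
  have h := sum_nthRootsFinset_biotSavartK_mul_left α Cα hM hw 1
  rw [mul_one] at h
  rw [h, polygonInteraction]
  simp only [biotSavartK_eq, ← mul_sum]
  ring

theorem sum_nthRootsFinset_biotSavartK_zero_left (hM : 1 < M) :
    ∑ u ∈ nthRootsFinset M (1 : ℂ), biotSavartK α Cα 0 u = 0 := by
  have hζ := Complex.isPrimitiveRoot_exp M (by omega)
  have h := sum_nthRootsFinset_biotSavartK_mul_left α Cα (by omega) hζ.pow_eq_one 0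
  rw [mul_zero] at h
  by_contra hV
  exact hζ.ne_one hM ((mul_eq_right₀ hV).1 h.symm)

end PolygonVelocity

theorem vortex_crystal_stationary_general
    (N : ℕ) (hN : 3 ≤ N) (α : ℝ) (Cα : ℝ) :
    ∃ aN : ℝ,
      (aN : ℂ) = -∑ j ∈ Finset.Icc 1 (N - 2),
          (1 - Complex.exp (2 * Real.pi * Complex.I / (N - 1)) ^ j) /
            ((‖(1 : ℂ) - Complex.exp (2 * Real.pi * Complex.I / (N - 1)) ^ j‖ ^ (α + 1) : ℝ) : ℂ) ∧
      (∀ i : Fin N,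
        ∑ j ∈ Finset.univ.erase i,
          (if (j : ℕ) = N - 1 then aN else 1) •
            biotSavartK α Cα
              (if (i : ℕ) = N - 1 then 0 else Complex.exp (2 * Real.pi * Complex.I / (N - 1)) ^ ((i : ℕ) + 1))
              (if (j : ℕ) = N - 1 then 0 else Complex.exp (2 * Real.pi * Complex.I / (N - 1)) ^ ((j : ℕ) + 1))
          = 0) := by
  obtain ⟨M, rfl⟩ : ∃ M, N = M + 1 := ⟨N - 1, by omega⟩
  have hM_cast : ((M + 1 : ℕ) : ℂ) - 1 = M := by push_cast; ring
  simp only [hM_cast, Nat.add_sub_cancel, show M + 1 - 2 = M - 1 by omega]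
  set ζ := exp (2 * Real.pi * I / M)
  have hζ : IsPrimitiveRoot ζ M := Complex.isPrimitiveRoot_exp M (by omega)
  have hS : ∑ j ∈ Icc 1 (M - 1), (1 - ζ ^ j) / ((‖1 - ζ ^ j‖ ^ (α + 1) : ℝ) : ℂ) =
      polygonInteraction α M :=
    hζ.sum_Icc_pow (f := fun z => (1 - z) / ((‖1 - z‖ ^ (α + 1) : ℝ) : ℂ)) (by simp)
  refine ⟨-(polygonInteraction α M).re,
    by rw [ofReal_neg, ofReal_re_polygonInteraction, ← hS], fun i => ?_⟩
  rw [sum_erase _ (by simp [biotSavartK_self]), Fin.sum_univ_castSucc]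
  simp only [Fin.val_castSucc, Fin.val_last, fun j : Fin M => j.isLt.ne, if_false, if_true,
    one_smul, hζ.sum_fin_pow_succ (biotSavartK α Cα _)]
  induction i using Fin.lastCases with
  | last =>
    simp only [Fin.val_last, if_true]
    rw [biotSavartK_self, smul_zero, add_zero,
      sum_nthRootsFinset_biotSavartK_zero_left α Cα (by omega)]
  | cast m =>
    have hw : (ζ ^ ((m : ℕ) + 1)) ^ M = 1 := by rw [pow_right_comm, hζ.pow_eq_one, one_pow]
    simp only [Fin.val_castSucc, m.isLt.ne, if_false]
    rw [sum_nthRootsFinset_biotSavartK α Cα (by omega) hw,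
      biotSavartK_zero_right α Cα (norm_eq_one_of_pow_eq_one hw (by omega)), real_smul,
      ofReal_neg, ofReal_re_polygonInteraction]
    ring

/-- the vortex crystal made of a regular `(N−1)`-gon of unit vortices
`zⱼ* = ζʲ` (`ζ = e^{2πi/(N−1)}`, `j = 1, …, N−1`) together with a central vortex at `0`
of intensity `a_N = −∑_{j=1}^{N−2} (1−ζʲ)/|1−ζʲ|^{α+1}` (a real number) is a stationary
configuration of the `α`-point-vortex system. Indices are encoded by `i : Fin N`,
with `i` representing the vortex `z_{i+1}*`. -/
theorem vortex_crystal_stationary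
    (N : ℕ) (hN : 3 ≤ N) (α : ℝ) (hα : 1 ≤ α) (hα' : α < 2) (Cα : ℝ) (hCα : 0 < Cα) :
    ∃ aN : ℝ,
      (aN : ℂ) = -∑ j ∈ Finset.Icc 1 (N - 2),
          (1 - Complex.exp (2 * Real.pi * Complex.I / (N - 1)) ^ j) /
            ((‖(1 : ℂ) - Complex.exp (2 * Real.pi * Complex.I / (N - 1)) ^ j‖ ^ (α + 1) : ℝ) : ℂ) ∧
      (∀ i : Fin N,
        ∑ j ∈ Finset.univ.erase i,
          (if (j : ℕ) = N - 1 then aN else 1) •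
            biotSavartK α Cα
              (if (i : ℕ) = N - 1 then 0 else Complex.exp (2 * Real.pi * Complex.I / (N - 1)) ^ ((i : ℕ) + 1))
              (if (j : ℕ) = N - 1 then 0 else Complex.exp (2 * Real.pi * Complex.I / (N - 1)) ^ ((j : ℕ) + 1))
          = 0) :=
  vortex_crystal_stationary_general N hN α Cα
end

section
/- Let N ≥ 3, α ∈ [1,2), and ζ = exp(2πi/(N−1)) ∈ ℂ. Then the complex number Σ_{j=1}^{N−2} (1−ζ^j)/|1−ζ^j|^{α+1} has zero imaginary part and strictly positive real part; in particular it is a non-vanishing real number. -/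
/-!
Conjugation maps `ζ ^ j` to `ζ ^ (n - j)` for an `n`-th root of unity `ζ`, so it permutes the
terms of the sum, which is therefore real. Each term has positive real part, because
`2 (1 - Re w) = |1 - w|²` for `|w| = 1`.
-/

open Complex ComplexConjugate Finset

noncomputable def crystalTerm (s : ℝ) (z : ℂ) : ℂ :=
  (1 - z) / ((‖1 - z‖ ^ s : ℝ) : ℂ)

lemma conj_crystalTerm (s : ℝ) (z : ℂ) : conj (crystalTerm s z) = crystalTerm s (conj z) := by
  have hnorm : ‖1 - conj z‖ = ‖1 - z‖ := by
    rw [← RCLike.norm_conj (1 - z), map_sub, map_one]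
  rw [crystalTerm, crystalTerm, map_div₀, map_sub, map_one, conj_ofReal, hnorm]

lemma two_mul_re_one_sub_eq_norm_sq {w : ℂ} (hw : ‖w‖ = 1) : 2 * (1 - w).re = ‖1 - w‖ ^ 2 := by
  have hsq : w.re ^ 2 + w.im ^ 2 = 1 := by
    have h := Complex.sq_norm w
    rw [hw, normSq_apply] at h
    linarith
  rw [Complex.sq_norm, normSq_apply]
  simp only [sub_re, one_re, sub_im, one_im]
  linarith

lemma re_one_sub_pos {w : ℂ} (hw : ‖w‖ = 1) (h1 : w ≠ 1) : 0 < (1 - w).re := by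
  have hpos : 0 < ‖1 - w‖ := norm_pos_iff.mpr (sub_ne_zero.mpr h1.symm)
  nlinarith [two_mul_re_one_sub_eq_norm_sq hw]

lemma crystalTerm_re_pos (s : ℝ) {w : ℂ} (hw : ‖w‖ = 1) (h1 : w ≠ 1) :
    0 < (crystalTerm s w).re := by
  rw [crystalTerm, div_ofReal_re]
  exact div_pos (re_one_sub_pos hw h1)
    (Real.rpow_pos_of_pos (norm_pos_iff.mpr (sub_ne_zero.mpr h1.symm)) s)

lemma conj_pow_eq_pow_sub {ζ : ℂ} {n j : ℕ} (hζ : ζ ^ n = 1) (hn : n ≠ 0) (hj : j ≤ n) :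
    conj (ζ ^ j) = ζ ^ (n - j) := by
  have hnorm : ‖ζ ^ j‖ = 1 := by rw [norm_pow, norm_eq_one_of_pow_eq_one hζ hn, one_pow]
  have hζ0 : ζ ≠ 0 := by rintro rfl; simp [hn] at hζ
  rw [← inv_eq_conj hnorm, pow_sub₀ ζ hζ0 hj, hζ, one_mul]

lemma im_sum_Icc_pow_eq_zero (f : ℂ → ℂ) (hf : ∀ z, conj (f z) = f (conj z)) {ζ : ℂ} {n : ℕ}
    (hζ : ζ ^ n = 1) : (∑ j ∈ Icc 1 (n - 1), f (ζ ^ j)).im = 0 := by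
  rcases Nat.eq_zero_or_pos n with rfl | hn
  · simp
  have hreflect : ∀ j ∈ Icc 1 (n - 1), n - j ∈ Icc 1 (n - 1) := by
    intro j hj; simp only [mem_Icc] at hj ⊢; omega
  have hinvol : ∀ j ∈ Icc 1 (n - 1), n - (n - j) = j := by
    intro j hj; simp only [mem_Icc] at hj; omega
  rw [← conj_eq_iff_im, map_sum]
  refine sum_nbij' (n - ·) (n - ·) hreflect hreflect hinvol hinvol fun j hj => ?_
  rw [hf, conj_pow_eq_pow_sub hζ hn.ne' (by simp only [mem_Icc] at hj; omega)]

lemma re_sum_Icc_crystalTerm_pos (s : ℝ) {ζ : ℂ} {n : ℕ} (hζ : IsPrimitiveRoot ζ n)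
    (hn : 2 ≤ n) : 0 < (∑ j ∈ Icc 1 (n - 1), crystalTerm s (ζ ^ j)).re := by
  rw [re_sum]
  refine sum_pos (fun j hj => ?_) ⟨1, by simp only [mem_Icc]; omega⟩
  simp only [mem_Icc] at hj
  have hnorm : ‖ζ ^ j‖ = 1 := by rw [norm_pow, hζ.norm'_eq_one (by omega), one_pow]
  exact crystalTerm_re_pos s hnorm (hζ.pow_ne_one_of_pos_of_lt (by omega) (by omega))

theorem crystal_sum_real_positive_general
    (N : ℕ) (hN : 3 ≤ N) (α : ℝ) :
    (∑ j ∈ Finset.Icc 1 (N - 2),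
        (1 - Complex.exp (2 * Real.pi * Complex.I / (N - 1)) ^ j) /
          ((‖(1 : ℂ) - Complex.exp (2 * Real.pi * Complex.I / (N - 1)) ^ j‖ ^ (α + 1) : ℝ) : ℂ)).im
        = 0 ∧
    0 < (∑ j ∈ Finset.Icc 1 (N - 2),
        (1 - Complex.exp (2 * Real.pi * Complex.I / (N - 1)) ^ j) /
          ((‖(1 : ℂ) - Complex.exp (2 * Real.pi * Complex.I / (N - 1)) ^ j‖ ^ (α + 1) : ℝ) : ℂ)).re := by
  have hprim : IsPrimitiveRoot (exp (2 * Real.pi * I / (N - 1))) (N - 1) := by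
    have h := isPrimitiveRoot_exp (N - 1) (by omega)
    rwa [Nat.cast_sub (by omega), Nat.cast_one] at h
  set ζ := exp (2 * Real.pi * I / (N - 1))
  have hrange : N - 2 = (N - 1) - 1 := by omega
  have hterm : ∀ j : ℕ,
      (1 - ζ ^ j) / ((‖1 - ζ ^ j‖ ^ (α + 1) : ℝ) : ℂ) = crystalTerm (α + 1) (ζ ^ j) :=
    fun _ => rfl
  simp only [hrange, hterm]
  exact ⟨im_sum_Icc_pow_eq_zero (crystalTerm (α + 1)) (conj_crystalTerm _) hprim.pow_eq_one,
    re_sum_Icc_crystalTerm_pos (α + 1) hprim (by omega)⟩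

/-- for `N ≥ 3`, `α ∈ [1,2)` and `ζ = e^{2πi/(N−1)}`, the complex number
`∑_{j=1}^{N−2} (1−ζʲ)/|1−ζʲ|^{α+1}` has zero imaginary part and strictly positive real
part; in particular it is a non-vanishing real number. -/
theorem crystal_sum_real_positive
    (N : ℕ) (hN : 3 ≤ N) (α : ℝ) (hα : 1 ≤ α) (hα' : α < 2) :
    (∑ j ∈ Finset.Icc 1 (N - 2),
        (1 - Complex.exp (2 * Real.pi * Complex.I / (N - 1)) ^ j) /
          ((‖(1 : ℂ) - Complex.exp (2 * Real.pi * Complex.I / (N - 1)) ^ j‖ ^ (α + 1) : ℝ) : ℂ)).im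
        = 0 ∧
    0 < (∑ j ∈ Finset.Icc 1 (N - 2),
        (1 - Complex.exp (2 * Real.pi * Complex.I / (N - 1)) ^ j) /
          ((‖(1 : ℂ) - Complex.exp (2 * Real.pi * Complex.I / (N - 1)) ^ j‖ ^ (α + 1) : ℝ) : ℂ)).re :=
  crystal_sum_real_positive_general N hN α
end

section
/- Let α ∈ [1,2) and C_α > 0. Consider the three points z₁* = (−1,0), z₂* = (1,0), z₃* = (0,0) in ℝ² with intensities a₁ = 1, a₂ = 1, a₃ = −2^{−α}. Then this configuration is a stationary solution of the α-point-vortex system: for every i ∈ {1,2,3}, Σ_{j≠i} a_j K_α(z_i*, z_j*) = 0. -/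
theorem biotSavartK_of_sub_eq_smul {α Cα t : ℝ} (ht : 0 < t) {x y x' y' : ℂ}
    (h : x' - y' = t • (x - y)) :
    biotSavartK α Cα x' y' = t ^ (-α) • biotSavartK α Cα x y := by
  have hnorm : ‖x' - y'‖ ^ (α + 1) = t ^ α * t * ‖x - y‖ ^ (α + 1) := by
    rw [h, norm_smul, Real.norm_of_nonneg ht.le, Real.mul_rpow ht.le (norm_nonneg _),
      Real.rpow_add ht, Real.rpow_one]
  have ht' : (t : ℂ) ≠ 0 := Complex.ofReal_ne_zero.mpr ht.ne'
  rw [biotSavartK, biotSavartK, hnorm, h, Real.rpow_neg ht.le]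
  simp only [Complex.real_smul]
  push_cast
  field_simp

theorem biotSavartK_of_sub_eq_neg {α Cα : ℝ} {x y x' y' : ℂ} (h : x' - y' = -(x - y)) :
    biotSavartK α Cα x' y' = -biotSavartK α Cα x y := by
  simp only [biotSavartK, h, norm_neg, mul_neg, smul_neg]

theorem three_vortex_configuration_stationary_general
    (α : ℝ) (Cα : ℝ) :
    ∀ i : Fin 3,
      ∑ j ∈ Finset.univ.erase i,
        (![1, 1, -(2:ℝ) ^ (-α)] j) • biotSavartK α Cα (![-1, 1, 0] i) (![-1, 1, 0] j) = 0 := by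
  have outer_left : biotSavartK α Cα (-1) 1 = (2:ℝ) ^ (-α) • biotSavartK α Cα (-1) 0 :=
    biotSavartK_of_sub_eq_smul two_pos (by norm_num)
  have outer_right : biotSavartK α Cα 1 (-1) = (2:ℝ) ^ (-α) • biotSavartK α Cα 1 0 :=
    biotSavartK_of_sub_eq_smul two_pos (by norm_num)
  have center : biotSavartK α Cα 0 1 = -biotSavartK α Cα 0 (-1) :=
    biotSavartK_of_sub_eq_neg (by norm_num)
  intro i
  rw [Finset.sum_erase_eq_sub (Finset.mem_univ i), Fin.sum_univ_three]
  fin_cases i <;> simp [outer_left, outer_right, center]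

/-- the three-vortex configuration `z₁* = (−1,0)`, `z₂* = (1,0)`,
`z₃* = (0,0)` with intensities `a₁ = a₂ = 1`, `a₃ = −2^{−α}` is a stationary solution of
the `α`-point-vortex system. -/
theorem three_vortex_configuration_stationary
    (α : ℝ) (hα : 1 ≤ α) (hα' : α < 2) (Cα : ℝ) (hCα : 0 < Cα) :
    ∀ i : Fin 3,
      ∑ j ∈ Finset.univ.erase i,
        (![1, 1, -(2:ℝ) ^ (-α)] j) • biotSavartK α Cα (![-1, 1, 0] i) (![-1, 1, 0] j) = 0 :=
  three_vortex_configuration_stationary_general α Cα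
end

section
/- Let α ∈ [1,2). Let M_α be the 6×6 real matrix with rows: row 1 = (0, 2^{−(α+1)}, 0, 2^{−(α+1)}, 0, −2^{−α}); row 2 = (2^{−(α+1)}α, 0, 2^{−(α+1)}α, 0, −2^{−α}α, 0); row 3 = (0, 2^{−(α+1)}, 0, 2^{−(α+1)}, 0, −2^{−α}); row 4 = (2^{−(α+1)}α, 0, 2^{−(α+1)}α, 0, −2^{−α}α, 0); row 5 = (0, 1, 0, 1, 0, −2); row 6 = (α, 0, α, 0, −2α, 0). Then the vector v = (−1, √α, −1, √α, −2^{α+1}, √α·2^{α+1}) satisfies M_α v = (2 − 2^{−α})√α · v; in particular, (2 − 2^{−α})√α is a positive eigenvalue of M_α with eigenvector v. -/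
/-- `1/C_α` times the Jacobian of the `α`-point-vortex vector field at the stationary
three-vortex configuration `z₁* = (−1,0)`, `z₂* = (1,0)`, `z₃* = (0,0)` with intensities
`(1, 1, −2^{−α})`, as a `6 × 6` matrix in the coordinates `(p₁,q₁,p₂,q₂,p₃,q₃)`. -/
noncomputable def threeVortexJacobian (α : ℝ) : Matrix (Fin 6) (Fin 6) ℝ :=
  !![0, (2:ℝ) ^ (-(α+1)), 0, (2:ℝ) ^ (-(α+1)), 0, -(2:ℝ) ^ (-α);
     (2:ℝ) ^ (-(α+1)) * α, 0, (2:ℝ) ^ (-(α+1)) * α, 0, -(2:ℝ) ^ (-α) * α, 0;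
     0, (2:ℝ) ^ (-(α+1)), 0, (2:ℝ) ^ (-(α+1)), 0, -(2:ℝ) ^ (-α);
     (2:ℝ) ^ (-(α+1)) * α, 0, (2:ℝ) ^ (-(α+1)) * α, 0, -(2:ℝ) ^ (-α) * α, 0;
     0, 1, 0, 1, 0, -2;
     α, 0, α, 0, -2 * α, 0]

private lemma cv5 {β : Type*} (x : β) (u : Fin 5 → β) : Matrix.vecCons x u 5 = u 4 :=
  rfl

private lemma cv4 {β : Type*} (x : β) (u : Fin 5 → β) : Matrix.vecCons x u 4 = u 3 :=
  rfl

/-- the vector `v = (−1, √α, −1, √α, −2^{α+1}, √α·2^{α+1})` is an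
eigenvector of `M_α` for the positive eigenvalue `(2 − 2^{−α})√α`. -/
theorem three_vortex_jacobian_unstable_eigenvector
    (α : ℝ) (hα : 1 ≤ α) (hα' : α < 2) :
    (threeVortexJacobian α).mulVec
        ![-1, Real.sqrt α, -1, Real.sqrt α, -(2:ℝ) ^ (α+1), Real.sqrt α * (2:ℝ) ^ (α+1)]
      = ((2 - (2:ℝ) ^ (-α)) * Real.sqrt α) •
        ![-1, Real.sqrt α, -1, Real.sqrt α, -(2:ℝ) ^ (α+1), Real.sqrt α * (2:ℝ) ^ (α+1)] ∧
    (![-1, Real.sqrt α, -1, Real.sqrt α, -(2:ℝ) ^ (α+1), Real.sqrt α * (2:ℝ) ^ (α+1)]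
        : Fin 6 → ℝ) ≠ 0 ∧
    0 < (2 - (2:ℝ) ^ (-α)) * Real.sqrt α := by
  have hα0 : (0:ℝ) ≤ α := by linarith
  have hs2 : Real.sqrt α * Real.sqrt α = α := Real.mul_self_sqrt hα0
  have h1 : (2:ℝ) ^ (-1 + -α) = (2:ℝ) ^ (-α) / 2 := by
    rw [show (-1 + -α : ℝ) = -α - 1 by ring, Real.rpow_sub (by norm_num), Real.rpow_one]
  have h1' : (2:ℝ) ^ (-(α + 1)) = (2:ℝ) ^ (-α) / 2 := by
    rw [show (-(α + 1) : ℝ) = -1 + -α by ring]; exact h1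
  have hB : (2:ℝ) ^ (-α) * (2:ℝ) ^ (α+1) = 2 := by
    rw [← Real.rpow_add (by norm_num)]
    norm_num
  have hlt : (2:ℝ) ^ (-α) < 2 := by
    calc (2:ℝ) ^ (-α) ≤ (2:ℝ) ^ (0:ℝ) :=
          Real.rpow_le_rpow_of_exponent_le (by norm_num) (by linarith)
      _ < 2 := by norm_num
  have hsp : 0 < Real.sqrt α := Real.sqrt_pos.mpr (by linarith)
  refine ⟨?_, ?_, ?_⟩
  · have hB' : (2:ℝ) ^ (-α) * (2:ℝ) ^ (1+α) = 2 := by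
      rw [← Real.rpow_add (by norm_num)]; norm_num
    funext i
    fin_cases i <;>
      simp [threeVortexJacobian, Matrix.mulVec, dotProduct, Fin.sum_univ_six,
        cv5, cv4, h1, h1'] <;>
      ring_nf <;>
      first
        | linear_combination (-Real.sqrt α) * hB'
        | linear_combination α * hB' + ((2:ℝ) ^ (-α) - 2) * hs2
        | linear_combination Real.sqrt α * hB'
        | linear_combination α * hB' +
            ((2:ℝ) ^ (-α) * (2:ℝ) ^ (1+α) - 2 * (2:ℝ) ^ (1+α)) * hs2
  · intro h
    have := congrFun h 0
    simp at this
  · nlinarith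
end

section
/- Let N ≥ 1, κ₁, κ₂ > 0, C ≥ 0, T > 0. Let f : (ℝ²)^N → (ℝ²)^N satisfy |f(X) − f(X')|_∞ ≤ κ₂ |X − X'|_∞ for all X, X'. Let Z : [0,T] → (ℝ²)^N be C¹ with Z'(t) = f(Z(t)); let I₁,…,I_N : [0,T] → [0,∞) be C¹ with I_j'(t) ≤ 2κ₁ I_j(t) for all t; and let B : [0,T] → (ℝ²)^N be C¹ with |B'(t) − f(B(t))|_∞ ≤ C Σ_{j=1}^N √(I_j(t)) for all t and B(0) = Z(0). Then for all t ∈ [0,T]: |B(t) − Z(t)|_∞ ≤ (C/κ₁) (Σ_{j=1}^N √(I_j(0))) e^{(κ₁+κ₂) t}. -/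
/-!
Grönwall's inequality applied to `Iⱼ' ≤ 2κ₁ Iⱼ` gives `√Iⱼ(t) ≤ √Iⱼ(0) e^{κ₁ t}`, so the defect
of `B` is at most `C S e^{κ₁ t}` with `S = ∑ⱼ √Iⱼ(0)`. Hence `D = B − Z` satisfies
`‖D'‖ ≤ κ₂ ‖D‖ + C S e^{κ₁ t}` and `D(0) = 0`, and `(C S / κ₁) e^{(κ₁+κ₂) t}` is a supersolution
of this differential inequality: its derivative exceeds `κ₂` times itself by `C S e^{(κ₁+κ₂) t}`.
A barrier argument (with an `ε`-perturbation of the supersolution to make it strict) concludes.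
-/

open Set Real

theorem le_mul_exp_of_deriv_le_mul {g g' : ℝ → ℝ} {c T : ℝ}
    (hg : ∀ t ∈ Icc 0 T, HasDerivAt g (g' t) t) (bound : ∀ t ∈ Icc 0 T, g' t ≤ c * g t) :
    ∀ t ∈ Icc 0 T, g t ≤ g 0 * exp (c * t) := by
  intro t ht
  have h := le_gronwallBound_of_liminf_deriv_right_le (ε := 0)
    (fun s hs => (hg s hs).continuousAt.continuousWithinAt)
    (fun s hs _ hr => (hg s (Ico_subset_Icc_self hs)).hasDerivWithinAt.liminf_right_slope_le hr)
    le_rfl (fun s hs => by simpa using bound s (Ico_subset_Icc_self hs)) t ht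
  simpa [gronwallBound_ε0] using h

theorem sqrt_le_sqrt_mul_exp_of_deriv_le_two_mul {g g' : ℝ → ℝ} {c T : ℝ}
    (hg : ∀ t ∈ Icc 0 T, HasDerivAt g (g' t) t) (bound : ∀ t ∈ Icc 0 T, g' t ≤ 2 * c * g t) :
    ∀ t ∈ Icc 0 T, √(g t) ≤ √(g 0) * exp (c * t) := fun t ht =>
  calc √(g t) ≤ √(g 0 * exp (2 * c * t)) := sqrt_le_sqrt (le_mul_exp_of_deriv_le_mul hg bound t ht)
    _ = √(g 0) * exp (c * t) := by
      rw [sqrt_mul' _ (exp_pos _).le, ← exp_half]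
      ring_nf

variable {E : Type*} [NormedAddCommGroup E] [NormedSpace ℝ E]

/-- Comparison principle: `bound` says that `‖f‖` is a subsolution of `u' = K u + (v' - K v)`,
which `v` solves. -/
theorem image_norm_le_of_norm_deriv_right_le_supersolution {f f' : ℝ → E} {v v' : ℝ → ℝ}
    {K a b : ℝ} (hf : ContinuousOn f (Icc a b))
    (hf' : ∀ x ∈ Ico a b, HasDerivWithinAt f (f' x) (Ici x) x)
    (hv : ∀ x, HasDerivAt v (v' x) x) (ha : ‖f a‖ ≤ v a)
    (bound : ∀ x ∈ Ico a b, ‖f' x‖ ≤ v' x + K * (‖f x‖ - v x)) :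
    ∀ ⦃x⦄, x ∈ Icc a b → ‖f x‖ ≤ v x := by
  intro x hx
  refine le_of_forall_pos_le_add fun ε hε => ?_
  -- the fence `v + ε e^{(K+1)(y-x)}` is a strict supersolution, and equals `v x + ε` at `x`
  have hfence : ∀ y, HasDerivAt (fun y => v y + ε * exp ((K + 1) * (y - x)))
      (v' y + ε * (exp ((K + 1) * (y - x)) * (K + 1))) y := fun y =>
    (hv y).add ((((hasDerivAt_id y).sub_const x).const_mul (K + 1)).exp.const_mul ε |>.congr_deriv
      (by simp))
  have := image_norm_le_of_norm_deriv_right_lt_deriv_boundary hf hf' ?_ hfence ?_ hx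
  · simpa using this
  · have : 0 ≤ ε * exp ((K + 1) * (a - x)) := by positivity
    linarith
  · intro y hy hfy
    have hpos : 0 < ε * exp ((K + 1) * (y - x)) := by positivity
    have := bound y hy
    rw [hfy, add_sub_cancel_left] at this
    linarith

theorem norm_le_of_norm_deriv_le_mul_add_exp {f f' : ℝ → E} {K c A T : ℝ}
    (hK : 0 ≤ K) (hc : 0 < c) (hA : 0 ≤ A) (hf : ContinuousOn f (Icc 0 T))
    (hf' : ∀ x ∈ Ico 0 T, HasDerivWithinAt f (f' x) (Ici x) x) (h0 : f 0 = 0)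
    (bound : ∀ x ∈ Ico 0 T, ‖f' x‖ ≤ K * ‖f x‖ + A * exp (c * x)) :
    ∀ x ∈ Icc 0 T, ‖f x‖ ≤ A / c * exp ((c + K) * x) := by
  refine fun x hx => image_norm_le_of_norm_deriv_right_le_supersolution (K := K) hf hf'
    (fun y => (((hasDerivAt_id' y).const_mul (c + K)).exp.const_mul (A / c))) ?_ ?_ hx
  · rw [h0, norm_zero]
    positivity
  · intro y hy
    have hexp : A * exp (c * y) ≤ A * exp ((c + K) * y) := by
      gcongr
      exacts [hy.1, le_add_of_nonneg_right hK]
    have hsuper : A / c * (exp ((c + K) * y) * ((c + K) * 1)) - K * (A / c * exp ((c + K) * y))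
        = A * exp ((c + K) * y) := by
      field_simp
      ring
    linarith [bound y hy]

/-- `(ℝ²)^N` is modelled as `Fin N → ℂ`, whose sup norm is the maximum of the Euclidean norms
of the `N` components. -/
theorem center_trajectory_gronwall_bound_general
    (N : ℕ) (κ₁ κ₂ C T : ℝ)
    (hκ₁ : 0 < κ₁) (hκ₂ : 0 < κ₂) (hC : 0 ≤ C)
    (f : (Fin N → ℂ) → (Fin N → ℂ))
    (hf : ∀ X X' : Fin N → ℂ, ‖f X - f X'‖ ≤ κ₂ * ‖X - X'‖)
    (Z : ℝ → Fin N → ℂ)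
    (hZ : ∀ t ∈ Set.Icc 0 T, HasDerivAt Z (f (Z t)) t)
    (I : Fin N → ℝ → ℝ) (I' : Fin N → ℝ → ℝ)
    (hI : ∀ j, ∀ t ∈ Set.Icc 0 T, HasDerivAt (I j) (I' j t) t)
    (hI' : ∀ j, ∀ t ∈ Set.Icc 0 T, I' j t ≤ 2 * κ₁ * I j t)
    (B : ℝ → Fin N → ℂ) (B' : ℝ → Fin N → ℂ)
    (hB : ∀ t ∈ Set.Icc 0 T, HasDerivAt B (B' t) t)
    (hB' : ∀ t ∈ Set.Icc 0 T, ‖B' t - f (B t)‖ ≤ C * ∑ j, Real.sqrt (I j t))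
    (hB0 : B 0 = Z 0) :
    ∀ t ∈ Set.Icc 0 T,
      ‖B t - Z t‖ ≤ C / κ₁ * (∑ j, Real.sqrt (I j 0)) * Real.exp ((κ₁ + κ₂) * t) := by
  have hdiff : ∀ t ∈ Icc 0 T, HasDerivAt (fun s => B s - Z s) (B' t - f (Z t)) t :=
    fun t ht => (hB t ht).sub (hZ t ht)
  have hdefect : ∀ t ∈ Icc 0 T,
      ‖B' t - f (B t)‖ ≤ C * (∑ j, √(I j 0)) * exp (κ₁ * t) := fun t ht =>
    calc ‖B' t - f (B t)‖ ≤ C * ∑ j, √(I j t) := hB' t ht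
      _ ≤ C * ∑ j, √(I j 0) * exp (κ₁ * t) := by
        gcongr with j
        exact sqrt_le_sqrt_mul_exp_of_deriv_le_two_mul (hI j) (hI' j) t ht
      _ = C * (∑ j, √(I j 0)) * exp (κ₁ * t) := by rw [← Finset.sum_mul, mul_assoc]
  intro t ht
  rw [div_mul_eq_mul_div]
  refine norm_le_of_norm_deriv_le_mul_add_exp (A := C * ∑ j, √(I j 0)) hκ₂.le hκ₁ (by positivity)
    (fun s hs => (hdiff s hs).continuousAt.continuousWithinAt)
    (fun s hs => (hdiff s (Ico_subset_Icc_self hs)).hasDerivWithinAt) (sub_eq_zero.2 hB0)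
    (fun s hs => ?_) t ht
  linarith [norm_sub_le_norm_sub_add_norm_sub (B' s) (f (B s)) (f (Z s)), hf (B s) (Z s),
    hdefect s (Ico_subset_Icc_self hs)]

/-- quantitative core of the confinement argument. If the moments of
inertia satisfy `Iⱼ' ≤ 2κ₁ Iⱼ`, the blob-center vector `B` is an approximate solution of
`B' = f(B)` with defect `C ∑ⱼ √Iⱼ`, `Z` is an exact solution, `f` is `κ₂`-Lipschitz and
`B(0) = Z(0)`, then `|B(t) − Z(t)|_∞ ≤ (C/κ₁) (∑ⱼ √Iⱼ(0)) e^{(κ₁+κ₂)t}` on `[0,T]`.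
Here `(ℝ²)^N` is modelled as `Fin N → ℂ`, whose norm is the sup of the Euclidean norms
of the `N` components. -/
theorem center_trajectory_gronwall_bound
    (N : ℕ) (hN : 1 ≤ N) (κ₁ κ₂ C T : ℝ)
    (hκ₁ : 0 < κ₁) (hκ₂ : 0 < κ₂) (hC : 0 ≤ C) (hT : 0 < T)
    (f : (Fin N → ℂ) → (Fin N → ℂ))
    (hf : ∀ X X' : Fin N → ℂ, ‖f X - f X'‖ ≤ κ₂ * ‖X - X'‖)
    (Z : ℝ → Fin N → ℂ)
    (hZ : ∀ t ∈ Set.Icc 0 T, HasDerivAt Z (f (Z t)) t)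
    (I : Fin N → ℝ → ℝ) (I' : Fin N → ℝ → ℝ)
    (hInn : ∀ j, ∀ t ∈ Set.Icc 0 T, 0 ≤ I j t)
    (hI : ∀ j, ∀ t ∈ Set.Icc 0 T, HasDerivAt (I j) (I' j t) t)
    (hI' : ∀ j, ∀ t ∈ Set.Icc 0 T, I' j t ≤ 2 * κ₁ * I j t)
    (B : ℝ → Fin N → ℂ) (B' : ℝ → Fin N → ℂ)
    (hB : ∀ t ∈ Set.Icc 0 T, HasDerivAt B (B' t) t)
    (hB' : ∀ t ∈ Set.Icc 0 T, ‖B' t - f (B t)‖ ≤ C * ∑ j, Real.sqrt (I j t))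
    (hB0 : B 0 = Z 0) :
    ∀ t ∈ Set.Icc 0 T,
      ‖B t - Z t‖ ≤ C / κ₁ * (∑ j, Real.sqrt (I j 0)) * Real.exp ((κ₁ + κ₂) * t) :=
  center_trajectory_gronwall_bound_general N κ₁ κ₂ C T hκ₁ hκ₂ hC f hf Z hZ I I' hI hI' B B' hB hB'
    hB0
end

section
/- For every real α with 1 ≤ α < 2, the following inequality holds: (2/(5−α)) · ( (1+α) · (2 + 2^{−α} α √(3(1 + 2^{1+2α}))) / ((2 − 2^{−α}) √α) + 4 − 2α ) > 4. -/
set_option maxHeartbeats 800000 in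
private lemma three_vortex_key (s t r : ℝ) (hs1 : 1 ≤ s) (hs2 : s^2 < 2)
    (ht : 17/20 - 7*s^2/20 ≤ t) (ht2 : t ≤ 1/2)
    (hr : r^2 = 6 + 3*t^2) (hr0 : 0 < r) :
    6*((2 - t)*s) < (1+s^2)*(2 + s^2*r) := by
  nlinarith [sq_nonneg (s-1), sq_nonneg (r - 5/2), sq_nonneg (s*r - 5/2),
    mul_pos hr0 (lt_of_lt_of_le one_pos hs1), sq_nonneg ((s-1)*(r-2))]

/-- the paper's lower bound `g(α)` on the admissible concentration
exponent `ν` for the three-vortex construction exceeds `4` for every `α ∈ [1,2)`. -/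
theorem three_vortex_nu_bound_exceeds_four
    (α : ℝ) (hα : 1 ≤ α) (hα' : α < 2) :
    4 < 2 / (5 - α) *
        ((1 + α) * (2 + (2:ℝ) ^ (-α) * α * Real.sqrt (3 * (1 + (2:ℝ) ^ (1 + 2 * α))))
            / ((2 - (2:ℝ) ^ (-α)) * Real.sqrt α)
          + 4 - 2 * α) := by
  have hα0 : (0:ℝ) < α := by linarith
  set t : ℝ := (2:ℝ) ^ (-α) with htdef
  have ht0 : 0 < t := Real.rpow_pos_of_pos two_pos _
  have ht2 : t ≤ 1/2 := by
    have h := Real.rpow_le_rpow_of_exponent_le one_le_two (show -α ≤ -1 by linarith)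
    calc t ≤ (2:ℝ) ^ (-1 : ℝ) := h
      _ = 1/2 := by
        rw [Real.rpow_neg (by norm_num), Real.rpow_one]; norm_num
  have hlog2 : Real.log 2 ≤ 7/10 := by
    have := Real.log_two_lt_d9
    linarith
  have hlog2' : 0 < Real.log 2 := Real.log_pos (by norm_num)
  have ht' : t = (1/2) * Real.exp ((1 - α) * Real.log 2) := by
    rw [htdef, Real.rpow_def_of_pos (by norm_num : (0:ℝ) < 2),
      show (1:ℝ)/2 = Real.exp (-Real.log 2) by
        rw [Real.exp_neg, Real.exp_log (by norm_num : (0:ℝ) < 2)]; norm_num,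
      ← Real.exp_add]
    congr 1
    ring
  have htlin : 17/20 - 7*α/20 ≤ t := by
    have hexp : (1:ℝ) + (1 - α) * Real.log 2 ≤ Real.exp ((1 - α) * Real.log 2) := by
      linarith [Real.add_one_le_exp ((1 - α) * Real.log 2)]
    have h1 : (1 - α) * (7/10) ≤ (1 - α) * Real.log 2 :=
      mul_le_mul_of_nonpos_left hlog2 (by linarith)
    nlinarith [ht', hexp, h1]
  set s : ℝ := Real.sqrt α with hsdef
  have hs2 : s^2 = α := Real.sq_sqrt hα0.le
  have hs0 : 0 ≤ s := Real.sqrt_nonneg α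
  have hs1 : 1 ≤ s := by nlinarith
  have ht2' : t^2 = (2:ℝ) ^ (-(2*α)) := by
    rw [htdef, ← Real.rpow_natCast ((2:ℝ)^(-α)) 2, ← Real.rpow_mul (by norm_num : (0:ℝ) ≤ 2)]
    norm_num
    ring_nf
  have hβ : (2:ℝ)^(1+2*α) * t^2 = 2 := by
    rw [ht2', ← Real.rpow_add (by norm_num : (0:ℝ) < 2)]
    norm_num
  have hfac : (6 + 3*t^2) = t^2 * (3*(1+(2:ℝ)^(1+2*α))) := by
    linear_combination (-3) * hβ
  set r : ℝ := Real.sqrt (6 + 3*t^2) with hrdef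
  have hr : r^2 = 6 + 3*t^2 := Real.sq_sqrt (by positivity)
  have hr0 : 0 < r := Real.sqrt_pos.mpr (by positivity)
  have hkey : t * Real.sqrt (3*(1+(2:ℝ)^(1+2*α))) = r := by
    rw [hrdef, hfac, Real.sqrt_mul (sq_nonneg t), Real.sqrt_sq ht0.le]
  have hrw : t * α * Real.sqrt (3*(1+(2:ℝ)^(1+2*α))) = α * r := by
    rw [mul_comm t α, mul_assoc, hkey]
  rw [hrw]
  have hD : 0 < (2 - t) * s := mul_pos (by linarith) (by linarith)
  have hmain := three_vortex_key s t r hs1 (by rw [hs2]; exact hα')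
    (by rw [hs2]; exact htlin) ht2 hr hr0
  have hmain' : 6 * ((2 - t) * s) < (1 + α) * (2 + α * r) := by
    rw [← hs2]; exact hmain
  have h6 : 6 < (1 + α) * (2 + α * r) / ((2 - t) * s) := by
    rw [lt_div_iff₀ hD]
    linarith
  have h5 : (0:ℝ) < 5 - α := by linarith
  have hQ : 2 * (5 - α) < (1 + α) * (2 + α * r) / ((2 - t) * s) + 4 - 2 * α := by
    linarith
  calc (4:ℝ) = 2 / (5 - α) * (2 * (5 - α)) := by field_simp; ring
    _ < 2 / (5 - α) * ((1 + α) * (2 + α * r) / ((2 - t) * s) + 4 - 2 * α) :=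
      mul_lt_mul_of_pos_left hQ (by positivity)
end
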